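/- The operator S is self-adjoint for the pairing ⟨φ, ψ⟩ = Σₙ (−1)ⁿ Σ_{k=0}^n C(n,k) aₖ bₙ₋ₖ on Mahler coefficients: ⟨S(φ), ψ⟩ = ⟨φ, S(ψ)⟩ for all continuous φ, ψ : ℤₚ → ℂₚ. -/
import Mathlib


open Filter Finset

/-- The canonical embedding `ℤ_[p] → K` (where `K` plays the role of `ℂ_p`,
a complete nontrivially normed field extension of `ℚ_[p]`). -/
noncomputable def pc (p : ℕ) [Fact p.Prime] (K : Type*) [NontriviallyNormedField K]
    [NormedAlgebra ℚ_[p] K] (x : ℤ_[p]) : K :=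
  algebraMap ℚ_[p] K x

/-- The operator `S` : `S(f)(x) = f(x) - x·f(x-1)`. -/
noncomputable def Sop (p : ℕ) [Fact p.Prime] (K : Type*) [NontriviallyNormedField K]
    [NormedAlgebra ℚ_[p] K] (f : ℤ_[p] → K) : ℤ_[p] → K :=
  fun x => f x - pc p K x * f (x - 1)

/-- The Mahler basis function `βₙ(x) = C(x,n) = x(x-1)⋯(x-n+1)/n!`, valued in `K`. -/
noncomputable def bK (p : ℕ) [Fact p.Prime] (K : Type*) [NontriviallyNormedField K]
    [NormedAlgebra ℚ_[p] K] (n : ℕ) (x : ℤ_[p]) : K :=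
  (∏ i ∈ Finset.range n, (pc p K x - (i : K))) / (n.factorial : K)

/-- The pairing `⟨φ, ψ⟩ = Σₙ (-1)ⁿ Σ_{k=0}^n C(n,k) aₖ bₙ₋ₖ` on Mahler
coefficient sequences. -/
noncomputable def pairing (K : Type*) [NontriviallyNormedField K] (a b : ℕ → K) : K :=
  ∑' n : ℕ, (-1) ^ n * ∑ k ∈ Finset.range (n + 1), (n.choose k : K) * a k * b (n - k)

/-- The Mahler coefficients of `S φ` in terms of those of `φ`:
`aₙ ↦ aₙ - n·aₙ₋₁` (with `a₋₁ = 0`). -/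
def Scoeff (K : Type*) [NontriviallyNormedField K] (a : ℕ → K) (n : ℕ) : K :=
  a n - (n : K) * (if n = 0 then 0 else a (n - 1))

/-- `S` is self-adjoint for the pairing
`⟨φ, ψ⟩ = Σₙ (-1)ⁿ Σ_{k=0}^n C(n,k) aₖ bₙ₋ₖ` on Mahler coefficients:
`⟨S φ, ψ⟩ = ⟨φ, S ψ⟩` for all continuous `φ, ψ : ℤ_[p] → K`, where `S φ` has
Mahler coefficients `aₙ - n·aₙ₋₁`. -/
theorem stmt_16 (p : ℕ) [Fact p.Prime] (K : Type*) [NontriviallyNormedField K]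
    [NormedAlgebra ℚ_[p] K] [CompleteSpace K]
    (φ ψ : ℤ_[p] → K) (hφ : Continuous φ) (hψ : Continuous ψ)
    (a b : ℕ → K) (ha : Tendsto a atTop (nhds 0)) (hb : Tendsto b atTop (nhds 0))
    (hφm : ∀ x, φ x = ∑' n : ℕ, a n * bK p K n x)
    (hψm : ∀ x, ψ x = ∑' n : ℕ, b n * bK p K n x) :
    pairing K (Scoeff K a) b = pairing K a (Scoeff K b) := by
  unfold pairing Scoeff
  refine tsum_congr fun n => ?_
  congr 1
  have expand1 : ∑ k ∈ Finset.range (n + 1), (n.choose k : K) *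
      (a k - (k : K) * (if k = 0 then 0 else a (k - 1))) * b (n - k)
      = ∑ k ∈ Finset.range (n + 1), (n.choose k : K) * a k * b (n - k)
        - ∑ k ∈ Finset.range (n + 1),
          (n.choose k : K) * ((k : K) * (if k = 0 then 0 else a (k - 1))) * b (n - k) := by
    rw [← Finset.sum_sub_distrib]
    exact Finset.sum_congr rfl fun k _ => by ring
  have expand2 : ∑ k ∈ Finset.range (n + 1), (n.choose k : K) * a k *
      (b (n - k) - ((n - k : ℕ) : K) * (if n - k = 0 then 0 else b (n - k - 1)))
      = ∑ k ∈ Finset.range (n + 1), (n.choose k : K) * a k * b (n - k)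
        - ∑ k ∈ Finset.range (n + 1),
          (n.choose k : K) * a k * (((n - k : ℕ) : K) * (if n - k = 0 then 0 else b (n - k - 1))) := by
    rw [← Finset.sum_sub_distrib]
    exact Finset.sum_congr rfl fun k _ => by ring
  have key : ∑ k ∈ Finset.range (n + 1),
        (n.choose k : K) * ((k : K) * (if k = 0 then 0 else a (k - 1))) * b (n - k)
      = ∑ k ∈ Finset.range (n + 1),
        (n.choose k : K) * a k * (((n - k : ℕ) : K) * (if n - k = 0 then 0 else b (n - k - 1))) := by
    rw [Finset.sum_range_succ', Finset.sum_range_succ]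
    have h0 : (n.choose n : K) * a n * (((n - n : ℕ) : K) * (if n - n = 0 then 0 else b (n - n - 1))) = 0 := by
      simp
    have h1 : (n.choose 0 : K) * (((0:ℕ) : K) * (if (0:ℕ) = 0 then 0 else a (0 - 1))) * b (n - 0) = 0 := by
      simp
    rw [h0, h1, add_zero, add_zero]
    refine Finset.sum_congr rfl fun i hi => ?_
    have hin : i < n := Finset.mem_range.mp hi
    have hi0 : i + 1 ≠ 0 := Nat.succ_ne_zero i
    have hni : n - i ≠ 0 := Nat.sub_ne_zero_of_lt hin
    rw [if_neg hi0, if_neg hni, Nat.add_sub_cancel]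
    have h := Nat.choose_succ_right_eq n i
    have hc : (n.choose (i + 1) : K) * ((i + 1 : ℕ) : K) = (n.choose i : K) * ((n - i : ℕ) : K) := by
      exact_mod_cast congrArg (Nat.cast : ℕ → K) h
    have hsub : n - (i + 1) = n - i - 1 := by omega
    rw [hsub]
    push_cast at hc ⊢
    linear_combination a i * b (n - i - 1) * hc
  rw [expand1, expand2, key]
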